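/- In the free group F_n with word length Gromov form, for each nonidentity reduced word w let w⁻ be w with its last letter's exponent decreased by one in absolute value, and set u_w = δ_w − δ_{w⁻} ∈ ℝ[F_n]. Then ⟨u_w, u_w⟩ = 1 for all w ≠ e, and ⟨u_{w₁}, u_{w₂}⟩ = 0 for distinct nonidentity words w₁ ≠ w₂. -/

import Mathlib

/-- The Gromov form of the word length on the free group, on basis vectors. -/
noncomputable def gromovF (n : ℕ) (w₁ w₂ : FreeGroup (Fin n)) : ℝ :=
  ((FreeGroup.norm w₁ : ℝ) + (FreeGroup.norm w₂ : ℝ)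
    - (FreeGroup.norm (w₁⁻¹ * w₂) : ℝ)) / 2

/-- Bilinear extension of the Gromov form to ℝ[F_n]. -/
noncomputable def gromovFormF (n : ℕ) (a b : FreeGroup (Fin n) →₀ ℝ) : ℝ :=
  ∑ g ∈ a.support, ∑ h ∈ b.support, a g * b h * gromovF n g h

/-- w⁻: the reduced word of w with its last letter removed (last exponent
decreased by one in absolute value). -/
def predF (n : ℕ) (w : FreeGroup (Fin n)) : FreeGroup (Fin n) :=
  FreeGroup.mk (FreeGroup.toWord w).dropLast

/-- u_w = δ_w − δ_{w⁻} ∈ ℝ[F_n]. -/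
noncomputable def uF (n : ℕ) (w : FreeGroup (Fin n)) : FreeGroup (Fin n) →₀ ℝ :=
  Finsupp.single w 1 - Finsupp.single (predF n w) 1

/-!
The Gromov product `(|g| + |h| - |g⁻¹h|) / 2` on a free group is the length of the longest
common prefix of the reduced words of `g` and `h`: the common prefix cancels in `g⁻¹h`, and
what is left is already reduced. Deleting the last letter of `w` truncates its common prefix
with any word at `|w| - 1`, so with `k` the common prefix length of `w₁` and `w₂`,
`⟨u_{w₁}, u_{w₂}⟩ = k - min(k, |w₂| - 1) - min(k, |w₁| - 1) + min(k, |w₁| - 1, |w₂| - 1)`.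
This vanishes unless `k = |w₁| = |w₂|`, i.e. `w₁ = w₂`, where it equals `1`.
-/

namespace List

variable {β : Type*} [DecidableEq β]

def commonPrefixLen : List β → List β → ℕ
  | a :: l, b :: m => if a = b then commonPrefixLen l m + 1 else 0
  | _, _ => 0

@[simp] lemma commonPrefixLen_nil_left (m : List β) : commonPrefixLen [] m = 0 := rfl

@[simp] lemma commonPrefixLen_nil_right (l : List β) : commonPrefixLen l [] = 0 := by
  cases l <;> rfl

lemma commonPrefixLen_cons_cons (a b : β) (l m : List β) :
    commonPrefixLen (a :: l) (b :: m) = if a = b then commonPrefixLen l m + 1 else 0 := rfl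

lemma commonPrefixLen_comm (l m : List β) : commonPrefixLen l m = commonPrefixLen m l := by
  induction l generalizing m with
  | nil => simp
  | cons a l ih =>
    cases m with
    | nil => simp
    | cons b m => simp only [commonPrefixLen_cons_cons, ih, eq_comm]

@[simp] lemma commonPrefixLen_self (l : List β) : commonPrefixLen l l = l.length := by
  induction l with
  | nil => rfl
  | cons a l ih => simp [commonPrefixLen_cons_cons, ih]

lemma commonPrefixLen_le_length_left (l m : List β) : commonPrefixLen l m ≤ l.length := by
  induction l generalizing m with
  | nil => simp
  | cons a l ih =>
    cases m with
    | nil => simp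
    | cons b m =>
      rw [commonPrefixLen_cons_cons]
      split_ifs
      · simpa using ih m
      · exact Nat.zero_le _

lemma commonPrefixLen_le_length_right (l m : List β) : commonPrefixLen l m ≤ m.length :=
  commonPrefixLen_comm l m ▸ commonPrefixLen_le_length_left m l

lemma eq_of_commonPrefixLen_eq_length {l m : List β} (hl : commonPrefixLen l m = l.length)
    (hm : commonPrefixLen l m = m.length) : l = m := by
  induction l generalizing m with
  | nil => simpa [eq_comm] using hm
  | cons a l ih =>
    cases m with
    | nil => simp at hl
    | cons b m =>
      rw [commonPrefixLen_cons_cons] at hl hm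
      split_ifs at hl hm with hab
      · simp only [length_cons, Nat.add_right_cancel_iff] at hl hm
        rw [hab, ih hl hm]

lemma commonPrefixLen_of_prefix (l : List β) {p m : List β} (hp : p <+: m) :
    commonPrefixLen l p = min (commonPrefixLen l m) p.length := by
  induction l generalizing p m with
  | nil => simp
  | cons a l ih =>
    cases p with
    | nil => simp
    | cons b p =>
      obtain ⟨t, rfl⟩ := hp
      rw [cons_append, commonPrefixLen_cons_cons, commonPrefixLen_cons_cons,
        ih (prefix_append p t)]
      split_ifs <;> simp

lemma commonPrefixLen_dropLast_right (l m : List β) :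
    commonPrefixLen l m.dropLast = min (commonPrefixLen l m) (m.length - 1) := by
  rw [commonPrefixLen_of_prefix l (dropLast_prefix m), length_dropLast]

lemma commonPrefixLen_dropLast_left (l m : List β) :
    commonPrefixLen l.dropLast m = min (commonPrefixLen l m) (l.length - 1) := by
  rw [commonPrefixLen_comm, commonPrefixLen_dropLast_right, commonPrefixLen_comm]

end List

namespace FreeGroup

open List

variable {α : Type*} [DecidableEq α]

lemma IsReduced.invRev {L : List (α × Bool)} (h : IsReduced L) : IsReduced (invRev L) := by
  rw [isReduced_iff_reduce_eq, reduce_invRev, h.reduce_eq]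

lemma norm_mk_of_isReduced {L : List (α × Bool)} (h : IsReduced L) :
    norm (mk L) = L.length := by
  rw [norm, toWord_mk, h.reduce_eq]

lemma norm_inv_mk_mul_mk_add_two_mul_commonPrefixLen {l m : List (α × Bool)}
    (hl : IsReduced l) (hm : IsReduced m) :
    norm ((mk l)⁻¹ * mk m) + 2 * commonPrefixLen l m = l.length + m.length := by
  induction l generalizing m with
  | nil => simp [← one_eq_mk, norm_mk_of_isReduced hm]
  | cons a l ih =>
    cases m with
    | nil => simp [← one_eq_mk, inv_mk, norm_mk_of_isReduced hl.invRev, invRev_length]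
    | cons b m =>
      rw [commonPrefixLen_cons_cons]
      split_ifs with hab
      · subst hab
        have hcancel : (mk (a :: l))⁻¹ * mk (a :: m) = (mk l)⁻¹ * mk m := by
          rw [← singleton_append, ← singleton_append (l := m), ← mul_mk, ← mul_mk, mul_inv_rev,
            mul_assoc, inv_mul_cancel_left]
        have := ih (m := m) hl.tail hm.tail
        simp only [hcancel, length_cons]
        omega
      · -- `a ≠ b`, so nothing cancels between `invRev (a :: l)` and `b :: m`.
        have hred : IsReduced (invRev (a :: l) ++ b :: m) := by
          refine isChain_append.2 ⟨hl.invRev, hm, ?_⟩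
          simp only [invRev, getLast?_reverse, head?_cons, head?_map, Option.mem_def,
            Option.map_some, Option.some.injEq]
          rintro _ rfl _ rfl h1
          exact (Bool.eq_not.2 fun h2 => hab (Prod.ext h1 h2.symm)).symm
        rw [inv_mk, mul_mk, norm_mk_of_isReduced hred]
        simp [invRev_length]

lemma norm_inv_mul_add_two_mul_commonPrefixLen (g h : FreeGroup α) :
    norm (g⁻¹ * h) + 2 * commonPrefixLen g.toWord h.toWord = norm g + norm h := by
  simpa only [mk_toWord, norm] using norm_inv_mk_mul_mk_add_two_mul_commonPrefixLen
    (isReduced_toWord (x := g)) (isReduced_toWord (x := h))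

end FreeGroup

open FreeGroup List

lemma gromovF_eq_commonPrefixLen (n : ℕ) (g h : FreeGroup (Fin n)) :
    gromovF n g h = commonPrefixLen g.toWord h.toWord := by
  have hnorm := congrArg (Nat.cast : ℕ → ℝ) (norm_inv_mul_add_two_mul_commonPrefixLen g h)
  push_cast at hnorm
  rw [gromovF]
  linarith

lemma toWord_predF (n : ℕ) (w : FreeGroup (Fin n)) :
    (predF n w).toWord = w.toWord.dropLast := by
  rw [predF, toWord_mk, (isReduced_toWord.infix (dropLast_prefix _).isInfix).reduce_eq]

lemma gromovFormF_sub_single_sub_single (n : ℕ) (g₁ g₂ h₁ h₂ : FreeGroup (Fin n)) :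
    gromovFormF n (Finsupp.single g₁ 1 - Finsupp.single g₂ 1)
        (Finsupp.single h₁ 1 - Finsupp.single h₂ 1) =
      gromovF n g₁ h₁ - gromovF n g₁ h₂ - gromovF n g₂ h₁ + gromovF n g₂ h₂ := by
  change Finsupp.sum _ (fun g x => Finsupp.sum _ fun h y => x * y * gromovF n g h) = _
  simp only [mul_sub, sub_mul, implies_true, Finsupp.sum_sub_index, mul_zero, zero_mul,
    Finsupp.sum_single_index, mul_one, Finsupp.sum_sub, one_mul]
  ring

lemma gromovFormF_uF_uF (n : ℕ) {w₁ w₂ : FreeGroup (Fin n)} (h₁ : w₁ ≠ 1) (h₂ : w₂ ≠ 1) :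
    gromovFormF n (uF n w₁) (uF n w₂) = if w₁ = w₂ then 1 else 0 := by
  have hl₁ : 0 < w₁.toWord.length := length_pos_iff.2 (mt toWord_eq_nil_iff.1 h₁)
  have hl₂ : 0 < w₂.toWord.length := length_pos_iff.2 (mt toWord_eq_nil_iff.1 h₂)
  have hk₁ := commonPrefixLen_le_length_left w₁.toWord w₂.toWord
  have hk₂ := commonPrefixLen_le_length_right w₁.toWord w₂.toWord
  have hk : commonPrefixLen w₁.toWord w₂.toWord = w₁.toWord.length ∧
      commonPrefixLen w₁.toWord w₂.toWord = w₂.toWord.length ↔ w₁ = w₂ :=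
    ⟨fun ⟨e₁, e₂⟩ => toWord_injective (eq_of_commonPrefixLen_eq_length e₁ e₂),
      by rintro rfl; simp⟩
  rw [uF, uF, gromovFormF_sub_single_sub_single]
  simp only [gromovF_eq_commonPrefixLen, toWord_predF, commonPrefixLen_dropLast_left,
    commonPrefixLen_dropLast_right, ← hk]
  generalize commonPrefixLen w₁.toWord w₂.toWord = k at *
  generalize w₁.toWord.length = a at *
  generalize w₂.toWord.length = b at *
  have hnat : k + min (min k (a - 1)) (b - 1) =
      min k (b - 1) + min k (a - 1) + if k = a ∧ k = b then 1 else 0 := by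
    split_ifs <;> omega
  have hreal := congrArg (Nat.cast : ℕ → ℝ) hnat
  push_cast [Nat.cast_ite] at hreal ⊢
  linarith

/-- the family {u_w : w ≠ e} is orthonormal for the Gromov form of
the word length on the free group F_n. -/
theorem uF_orthonormal (n : ℕ) :
    (∀ w : FreeGroup (Fin n), w ≠ 1 → gromovFormF n (uF n w) (uF n w) = 1) ∧
    (∀ w₁ w₂ : FreeGroup (Fin n), w₁ ≠ 1 → w₂ ≠ 1 → w₁ ≠ w₂ →
      gromovFormF n (uF n w₁) (uF n w₂) = 0) :=
  ⟨fun w hw => by rw [gromovFormF_uF_uF n hw hw, if_pos rfl],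
    fun w₁ w₂ h₁ h₂ hne => by rw [gromovFormF_uF_uF n h₁ h₂, if_neg hne]⟩
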